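/- arXiv:2402.04613 — 3 statements merged into one kernel-verified Lean document; each statement's English description precedes it below -/
import Mathlib

section
/- Let f be an entropy function such that 1 is the unique minimizer of f, and let ν ∈ M_+(ℝ^d). Then for every B ≥ 0 the sublevel set { μ ∈ M_+(ℝ^d) : D_f(μ|ν) ≤ B } is bounded in total variation norm, i.e., there is C = C(B, ν, f) < ∞ with μ(ℝ^d) ≤ C for all μ in this set. -/
open MeasureTheory ENNReal Filter Topology Set
open scoped ZeroAtInfty RealInnerProductSpace BoundedContinuousFunction

noncomputable section

/-- Euclidean space `ℝ^d`. -/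
abbrev Rd (d : ℕ) : Type := EuclideanSpace ℝ (Fin d)

/-- An entropy function: a proper, convex, lower semicontinuous `f : ℝ → [0,∞]`
with `f x = ∞` for `x < 0` and `f 1 = 0` (properness is automatic from `f 1 = 0`). -/
structure IsEntropy (f : ℝ → ℝ≥0∞) : Prop where
  convex : ∀ x y a b : ℝ, 0 ≤ a → 0 ≤ b → a + b = 1 →
    f (a * x + b * y) ≤ ENNReal.ofReal a * f x + ENNReal.ofReal b * f y
  lsc : LowerSemicontinuous f
  top_of_neg : ∀ x : ℝ, x < 0 → f x = ⊤
  one_eq_zero : f 1 = 0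

/-- `1` is the unique minimizer of the entropy function `f`, i.e. `f t > 0` for `t ≠ 1`. -/
def UniqueMinOne (f : ℝ → ℝ≥0∞) : Prop := ∀ t : ℝ, t ≠ 1 → 0 < f t

/-- The recession constant `f'_∞ = lim_{t → ∞} f t / t` (the limit exists for convex `f`,
so it coincides with the `limsup`). -/
noncomputable def recession (f : ℝ → ℝ≥0∞) : ℝ≥0∞ :=
  Filter.limsup (fun t : ℝ => f t / ENNReal.ofReal t) Filter.atTop

/-- The `f`-divergence of finite nonnegative measures:
`D_f(μ|ν) = ∫ f(dμ/dν) dν + f'_∞ · μˢ(ℝ^d)` where `μ = (dμ/dν) ν + μˢ`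
is the Lebesgue decomposition of `μ` w.r.t. `ν` (convention `0 ⬝ ∞ = 0`). -/
noncomputable def fDiv {d : ℕ} (f : ℝ → ℝ≥0∞) (μ ν : Measure (Rd d)) : ℝ≥0∞ :=
  ∫⁻ x, f ((μ.rnDeriv ν x).toReal) ∂ν + recession f * μ.singularPart ν Set.univ

/-! Convexity and `f 1 = 0` make `t ↦ f t / (t - 1)` nondecreasing on `(1, ∞)`, so `f` grows at
least linearly: `c t ≤ 2 c + f t` for every `c ≤ f 2`, and `f'_∞ ≥ c / 2`. Integrating the first
bound against `ν` controls the absolutely continuous part of `μ`, the second controls the singular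
part, so `c μ(ℝ^d) ≤ 2 c ν(ℝ^d) + 2 D_f(μ|ν)`. Since `1` is the unique minimiser, `f 2 > 0`, and
`c = min (f 2) 1` is positive and finite. -/

namespace IsEntropy

variable {f : ℝ → ℝ≥0∞}

theorem ofReal_sub_one_mul_le (hf : IsEntropy f) {s t : ℝ} (hs : 1 ≤ s) (hst : s ≤ t) :
    ENNReal.ofReal (t - 1) * f s ≤ ENNReal.ofReal (s - 1) * f t := by
  rcases hst.eq_or_lt with rfl | hst
  · rfl
  have ht : 0 < t - 1 := by linarith
  -- `s = a • 1 + b • t` with `b = (s - 1) / (t - 1)`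
  have hcvx := hf.convex 1 t ((t - s) / (t - 1)) ((s - 1) / (t - 1))
    (div_nonneg (by linarith) ht.le) (div_nonneg (by linarith) ht.le)
    (by field_simp; ring)
  rw [hf.one_eq_zero, mul_zero, zero_add,
    show (t - s) / (t - 1) * 1 + (s - 1) / (t - 1) * t = s by field_simp; ring] at hcvx
  calc ENNReal.ofReal (t - 1) * f s
      ≤ ENNReal.ofReal (t - 1) * (ENNReal.ofReal ((s - 1) / (t - 1)) * f t) := by gcongr
    _ = ENNReal.ofReal (s - 1) * f t := by
      rw [← mul_assoc, ← ENNReal.ofReal_mul ht.le, mul_div_cancel₀ _ ht.ne']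

theorem mul_ofReal_sub_one_le (hf : IsEntropy f) {c : ℝ≥0∞} (hc : c ≤ f 2) {t : ℝ}
    (ht : 2 ≤ t) : c * ENNReal.ofReal (t - 1) ≤ f t := by
  calc c * ENNReal.ofReal (t - 1) ≤ ENNReal.ofReal (t - 1) * f 2 := by
        rw [mul_comm]; gcongr
    _ ≤ ENNReal.ofReal (2 - 1) * f t := hf.ofReal_sub_one_mul_le one_le_two ht
    _ = f t := by norm_num

theorem mul_ofReal_le_add (hf : IsEntropy f) {c : ℝ≥0∞} (hc : c ≤ f 2) (t : ℝ) :
    c * ENNReal.ofReal t ≤ 2 * c + f t := by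
  rcases le_total t 2 with ht | ht
  · calc c * ENNReal.ofReal t ≤ c * ENNReal.ofReal 2 := by gcongr
      _ ≤ 2 * c + f t := by simp [mul_comm]
  · calc c * ENNReal.ofReal t = c * ENNReal.ofReal (t - 1) + c := by
          conv_lhs => rw [← sub_add_cancel t 1]
          rw [ENNReal.ofReal_add (by linarith) zero_le_one, ENNReal.ofReal_one, mul_add, mul_one]
      _ ≤ f t + c := by gcongr; exact hf.mul_ofReal_sub_one_le hc ht
      _ ≤ 2 * c + f t := by rw [add_comm]; gcongr; exact le_mul_of_one_le_left' one_le_two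

theorem half_le_recession (hf : IsEntropy f) {c : ℝ≥0∞} (hc : c ≤ f 2) :
    c / 2 ≤ recession f := by
  refine le_limsup_of_frequently_le (Eventually.frequently ?_) (by isBoundedDefault)
  filter_upwards [eventually_ge_atTop (2 : ℝ)] with t ht
  rw [ENNReal.le_div_iff_mul_le (Or.inl (by simp; linarith)) (Or.inl ofReal_ne_top)]
  calc c / 2 * ENNReal.ofReal t = c * ENNReal.ofReal (t / 2) := by
        rw [ENNReal.ofReal_div_of_pos two_pos, ENNReal.ofReal_ofNat, div_eq_mul_inv,
          div_eq_mul_inv]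
        ring
    _ ≤ c * ENNReal.ofReal (t - 1) := by gcongr; linarith
    _ ≤ f t := hf.mul_ofReal_sub_one_le hc ht

end IsEntropy

theorem MeasureTheory.Measure.measure_eq_setLIntegral_rnDeriv_add_singularPart {α : Type*}
    [MeasurableSpace α] (μ ν : Measure α) [μ.HaveLebesgueDecomposition ν] {s : Set α}
    (hs : MeasurableSet s) :
    μ s = ∫⁻ x in s, μ.rnDeriv ν x ∂ν + μ.singularPart ν s := by
  conv_lhs => rw [← μ.rnDeriv_add_singularPart ν]
  rw [Measure.add_apply, withDensity_apply _ hs, add_comm]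

theorem mul_measure_univ_le_fDiv {d : ℕ} {f : ℝ → ℝ≥0∞} (hf : IsEntropy f) {c : ℝ≥0∞}
    (hc : c ≤ f 2) (μ ν : Measure (Rd d)) [SigmaFinite μ] [SigmaFinite ν] :
    c * μ univ ≤ 2 * c * ν univ + 2 * fDiv f μ ν := by
  have hρ : ∀ᵐ x ∂ν, μ.rnDeriv ν x = ENNReal.ofReal (μ.rnDeriv ν x).toReal := by
    filter_upwards [μ.rnDeriv_lt_top ν] with x hx
    rw [ENNReal.ofReal_toReal hx.ne]
  have hac : c * ∫⁻ x, μ.rnDeriv ν x ∂ν ≤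
      2 * c * ν univ + ∫⁻ x, f (μ.rnDeriv ν x).toReal ∂ν := by
    calc c * ∫⁻ x, μ.rnDeriv ν x ∂ν = ∫⁻ x, c * ENNReal.ofReal (μ.rnDeriv ν x).toReal ∂ν := by
          rw [← lintegral_const_mul _ (μ.measurable_rnDeriv ν)]
          exact lintegral_congr_ae (hρ.mono fun x hx => congrArg (c * ·) hx)
      _ ≤ ∫⁻ x, 2 * c + f (μ.rnDeriv ν x).toReal ∂ν :=
          lintegral_mono fun x => hf.mul_ofReal_le_add hc _
      _ = 2 * c * ν univ + ∫⁻ x, f (μ.rnDeriv ν x).toReal ∂ν := by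
          rw [lintegral_add_left measurable_const, lintegral_const]
  have hsing : c * μ.singularPart ν univ ≤ 2 * (recession f * μ.singularPart ν univ) := by
    rw [← mul_assoc]
    gcongr
    calc c = 2 * (c / 2) := (ENNReal.mul_div_cancel two_ne_zero ofNat_ne_top).symm
      _ ≤ 2 * recession f := by gcongr; exact hf.half_le_recession hc
  rw [μ.measure_eq_setLIntegral_rnDeriv_add_singularPart ν MeasurableSet.univ, setLIntegral_univ,
    mul_add, fDiv, mul_add, ← add_assoc]
  gcongr
  exact hac.trans (by gcongr; exact le_mul_of_one_le_left' one_le_two)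

theorem fDiv_sublevel_tv_bounded_general {d : ℕ} (f : ℝ → ℝ≥0∞) (hf : IsEntropy f)
    (hmin : UniqueMinOne f) (ν : Measure (Rd d)) [IsFiniteMeasure ν]
    (B : ℝ) :
    ∃ C : ℝ, ∀ μ : Measure (Rd d), IsFiniteMeasure μ →
      fDiv f μ ν ≤ ENNReal.ofReal B → (μ Set.univ).toReal ≤ C := by
  set c : ℝ≥0∞ := min (f 2) 1
  have hc0 : c ≠ 0 := (lt_min (hmin 2 (by norm_num)) zero_lt_one).ne'
  have hctop : c ≠ ⊤ := ne_top_of_le_ne_top one_ne_top (min_le_right _ _)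
  have hX : 2 * c * ν univ + 2 * ENNReal.ofReal B ≠ ⊤ := by finiteness
  refine ⟨((2 * c * ν univ + 2 * ENNReal.ofReal B) / c).toReal, fun μ _ hμ =>
    ENNReal.toReal_mono (ENNReal.div_ne_top hX hc0) ?_⟩
  rw [ENNReal.le_div_iff_mul_le (Or.inl hc0) (Or.inl hctop), mul_comm]
  calc c * μ univ ≤ 2 * c * ν univ + 2 * fDiv f μ ν :=
        mul_measure_univ_le_fDiv hf (min_le_left _ _) μ ν
    _ ≤ 2 * c * ν univ + 2 * ENNReal.ofReal B := by gcongr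

/-- If `1` is the unique minimizer of the entropy function `f`, then sublevel sets of
`D_f(·|ν)` are bounded in total variation norm. -/
theorem fDiv_sublevel_tv_bounded {d : ℕ} (f : ℝ → ℝ≥0∞) (hf : IsEntropy f)
    (hmin : UniqueMinOne f) (ν : Measure (Rd d)) [IsFiniteMeasure ν]
    (B : ℝ) (hB : 0 ≤ B) :
    ∃ C : ℝ, ∀ μ : Measure (Rd d), IsFiniteMeasure μ →
      fDiv f μ ν ≤ ENNReal.ofReal B → (μ Set.univ).toReal ≤ C :=
  fDiv_sublevel_tv_bounded_general f hf hmin ν B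
end
end

section
/- Let K be a bounded, C_0, characteristic kernel on ℝ^d, f an entropy function such that 1 is the unique minimizer of f, and λ > 0. Fix r > 0 and μ_0 ∈ M_+(ℝ^d), and let B_r(μ_0) := { μ ∈ M_+(ℝ^d) : d_K(μ,μ_0) ≤ r }. Then for any sequence (μ_n) ⊂ B_r(μ_0) and any μ ∈ B_r(μ_0), one has D^λ_f(μ_n|μ) → 0 if and only if d_K(μ_n, μ) → 0. -/
open MeasureTheory ENNReal Filter Topology Set
open scoped ZeroAtInfty RealInnerProductSpace BoundedContinuousFunction

noncomputable section

/-- A kernel on `ℝ^d`: symmetric, positive definite, bounded, and with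
`K x · ∈ C₀(ℝ^d)` for every `x`. -/
structure IsKernel {d : ℕ} (K : Rd d → Rd d → ℝ) : Prop where
  symm : ∀ x y, K x y = K y x
  posdef : ∀ (n : ℕ) (x : Fin n → Rd d) (a : Fin n → ℝ),
    0 ≤ ∑ i, ∑ j, a i * a j * K (x i) (x j)
  bounded : ∃ C : ℝ, ∀ x, K x x ≤ C
  cont : ∀ x, Continuous (K x)
  zero_at_infty : ∀ x, Tendsto (K x) (Filter.cocompact (Rd d)) (𝓝 0)

/-- Integral of a function against a finite signed measure, via the Jordan decomposition. -/
noncomputable def sIntegral {d : ℕ} (α : SignedMeasure (Rd d)) (g : Rd d → ℝ) : ℝ :=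
  ∫ x, g x ∂α.toJordanDecomposition.posPart - ∫ x, g x ∂α.toJordanDecomposition.negPart

/-- Squared MMD of two finite signed measures: `∬ K(x,y) d(α−β)(x) d(α−β)(y)`. -/
noncomputable def mmdSq {d : ℕ} (K : Rd d → Rd d → ℝ) (α β : SignedMeasure (Rd d)) : ℝ :=
  sIntegral (α - β) (fun x => sIntegral (α - β) (fun y => K x y))

/-- The maximum mean discrepancy `d_K` of two finite signed measures. -/
noncomputable def mmd {d : ℕ} (K : Rd d → Rd d → ℝ) (α β : SignedMeasure (Rd d)) : ℝ :=
  Real.sqrt (mmdSq K α β)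

/-- A kernel is characteristic if `d_K(α,β) = 0` implies `α = β` for finite signed
measures `α, β`. -/
def Characteristic {d : ℕ} (K : Rd d → Rd d → ℝ) : Prop :=
  ∀ α β : SignedMeasure (Rd d), mmd K α β = 0 → α = β

/-- Squared MMD of two finite nonnegative measures:
`d_K(α,β)² = ∬K dα dα − 2 ∬K dβ dα + ∬K dβ dβ`. -/
noncomputable def mmdSqM {d : ℕ} (K : Rd d → Rd d → ℝ) (α β : Measure (Rd d)) : ℝ :=
  (∫ x, (∫ y, K x y ∂α) ∂α) - 2 * (∫ x, (∫ y, K x y ∂β) ∂α) + ∫ x, (∫ y, K x y ∂β) ∂β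

/-- The MMD `d_K` of two finite nonnegative measures. -/
noncomputable def mmdM {d : ℕ} (K : Rd d → Rd d → ℝ) (α β : Measure (Rd d)) : ℝ :=
  Real.sqrt (mmdSqM K α β)

/-- The MMD-regularized `f`-divergence `D^λ_{f,ν}(μ)` of a finite nonnegative measure `μ`:
`inf_{σ ∈ M₊} D_f(σ|ν) + (1/(2λ)) d_K(μ,σ)²`. -/
noncomputable def regFDivM {d : ℕ} (K : Rd d → Rd d → ℝ) (f : ℝ → ℝ≥0∞)
    (ν : Measure (Rd d)) (lam : ℝ) (μ : Measure (Rd d)) : ℝ≥0∞ :=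
  ⨅ σ : {σ : Measure (Rd d) // IsFiniteMeasure σ},
    fDiv f σ.1 ν + ENNReal.ofReal (mmdSqM K μ σ.1 / (2 * lam))

/-!
`mmdSqM` is the squared seminorm of `α - β` for the form `(α, β) ↦ ∬ K dα dβ`, which is positive
semidefinite on finite measures: integrating the Gram inequality `∑ᵢⱼ k(xᵢ, xⱼ) ≥ 0` against `n`
i.i.d. samples gives `n D + (n² - n) ∬ k ≥ 0` for a bounded positive definite `k`, hence `∬ k ≥ 0`;
finitely many weighted measures are handled at once by placing them on disjoint slices of
`Rd d × ι`. This gives `mmdSqM ≥ 0` and the triangle inequality for `mmdM`.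

Choosing `σ = μ` bounds `D^λ_f(μₙ|μ)` by `d_K(μₙ, μ)² / (2λ)`. Conversely, take near-minimizers
`σₙ`: then `d_K(μₙ, σₙ)² ≤ 2λ D^λ_f(μₙ|μ) → 0`, and `D_f(σₙ|μ) → 0`. Since `1` is the unique
minimizer of the convex `f`, `|t - 1|` is controlled by `ε + f(t) / c_ε`, and `f'_∞ > 0`
controls the singular part, so `σₙ → μ` in total variation, which dominates `d_K`.
-/

section PositiveDefinite

variable {X : Type*} [MeasurableSpace X]

lemma integral_comp_eval_pair {P : Measure X} [IsProbabilityMeasure P] {n : ℕ} {i j : Fin n}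
    (hij : i ≠ j) {F : X × X → ℝ} (hF : AEStronglyMeasurable F (P.prod P)) :
    ∫ x, F (x i, x j) ∂Measure.pi (fun _ ↦ P) = ∫ p, F p ∂(P.prod P) := by
  have hind : ProbabilityTheory.IndepFun (fun x : Fin n → X ↦ x i) (fun x ↦ x j)
      (Measure.pi fun _ ↦ P) :=
    (ProbabilityTheory.iIndepFun_pi (X := fun _ ↦ id) fun _ ↦ aemeasurable_id).indepFun hij
  have hmap : (Measure.pi fun _ ↦ P).map (fun x ↦ (x i, x j)) = P.prod P := by
    rw [(ProbabilityTheory.indepFun_iff_map_prod_eq_prod_map_map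
      (measurable_pi_apply i).aemeasurable (measurable_pi_apply j).aemeasurable).1 hind,
      (measurePreserving_eval _ i).map_eq, (measurePreserving_eval _ j).map_eq]
  rw [← hmap, integral_map ((measurable_pi_apply i).prodMk (measurable_pi_apply j)).aemeasurable
    (hmap ▸ hF)]

theorem integral_integral_nonneg_of_isProbabilityMeasure {P : Measure X} [IsProbabilityMeasure P]
    {k : X → X → ℝ} (hk : ∀ (n : ℕ) (x : Fin n → X), 0 ≤ ∑ i, ∑ j, k (x i) (x j))
    (hkm : Measurable (Function.uncurry k)) {C : ℝ} (hC : ∀ x y, |k x y| ≤ C) :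
    0 ≤ ∫ x, ∫ y, k x y ∂P ∂P := by
  set J := ∫ x, ∫ y, k x y ∂P ∂P
  set D := ∫ z, k z z ∂P
  have hdiag : Measurable fun z ↦ k z z := hkm.comp (measurable_id.prodMk measurable_id)
  -- For `n` i.i.d. samples the `n` diagonal terms have mean `D` and the others mean `J`.
  have hmean (n : ℕ) : 0 ≤ n * D + (n * n - n) * J := by
    have hint : ∀ i j : Fin n, Integrable (fun x : Fin n → X ↦ k (x i) (x j))
        (Measure.pi fun _ ↦ P) := fun i j ↦
      have hm : Measurable fun x : Fin n → X ↦ k (x i) (x j) :=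
        hkm.comp ((measurable_pi_apply i).prodMk (measurable_pi_apply j) :
          Measurable fun x : Fin n → X ↦ (x i, x j))
      .of_bound hm.aestronglyMeasurable C (ae_of_all _ fun x ↦ hC _ _)
    have hentry : ∀ i j : Fin n, ∫ x, k (x i) (x j) ∂Measure.pi (fun _ ↦ P)
        = if i = j then D else J := by
      intro i j
      split_ifs with hij
      · subst hij
        exact integral_comp_eval (μ := fun _ ↦ P) (f := fun z ↦ k z z) hdiag.aestronglyMeasurable
      · exact (integral_comp_eval_pair hij (F := Function.uncurry k) hkm.aestronglyMeasurable).trans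
          (integral_prod _ (.of_bound hkm.aestronglyMeasurable C (ae_of_all _ fun p ↦ hC _ _)))
    have h := integral_nonneg (μ := Measure.pi fun _ : Fin n ↦ P)
      (f := fun x ↦ ∑ i, ∑ j, k (x i) (x j)) fun x ↦ hk n x
    simp only [integral_finsetSum _ fun i _ ↦ integrable_finsetSum _ fun j _ ↦ hint i j,
      integral_finsetSum _ fun j _ ↦ hint _ j, hentry] at h
    have hrow (i j : Fin n) : (if i = j then D else J) = J + if i = j then D - J else 0 := by
      split_ifs <;> ring
    simp only [hrow, Finset.sum_add_distrib, Finset.sum_ite_eq, Finset.mem_univ, if_true,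
      Finset.sum_const, Finset.card_univ, Fintype.card_fin, nsmul_eq_mul] at h
    linarith
  by_contra! hJ
  obtain ⟨n, hn⟩ := exists_nat_gt (D / -J)
  have hneg : D + n * J < 0 := by
    have := (div_lt_iff₀ (neg_pos.2 hJ)).1 hn
    linarith
  have := hmean (n + 1)
  push_cast at this
  nlinarith

theorem integral_integral_nonneg_of_sum_sum_nonneg {τ : Measure X} [IsFiniteMeasure τ]
    {k : X → X → ℝ} (hk : ∀ (n : ℕ) (x : Fin n → X), 0 ≤ ∑ i, ∑ j, k (x i) (x j))
    (hkm : Measurable (Function.uncurry k)) {C : ℝ} (hC : ∀ x y, |k x y| ≤ C) :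
    0 ≤ ∫ x, ∫ y, k x y ∂τ ∂τ := by
  rcases eq_zero_or_neZero τ with rfl | _
  · simp
  obtain ⟨c, P, _, rfl⟩ : ∃ c : ℝ≥0∞, ∃ P : Measure X, IsProbabilityMeasure P ∧ τ = c • P :=
    ⟨τ univ, (τ univ)⁻¹ • τ, inferInstance, by
      rw [smul_smul, ENNReal.mul_inv_cancel (NeZero.ne _) (measure_ne_top _ _), one_smul]⟩
  simp only [integral_smul_measure, smul_eq_mul, integral_const_mul]
  have := integral_integral_nonneg_of_isProbabilityMeasure (P := P) hk hkm hC
  positivity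

lemma integral_sum_map_prodMk {ι : Type*} [Fintype ι] [MeasurableSpace ι] (α : ι → Measure X)
    {F : X × ι → ℝ} (hF : Integrable F (∑ i, (α i).map (·, i))) :
    ∫ p, F p ∂(∑ i, (α i).map (·, i)) = ∑ i, ∫ x, F (x, i) ∂α i := by
  have hFi (i : ι) : Integrable F ((α i).map (·, i)) :=
    hF.mono_measure (Finset.single_le_sum (fun j _ ↦ Measure.zero_le _) (Finset.mem_univ i))
  rw [integral_finsetSum_measure fun i _ ↦ hFi i]
  exact Finset.sum_congr rfl fun i _ ↦
    integral_map measurable_prodMk_right.aemeasurable (hFi i).aestronglyMeasurable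

end PositiveDefinite

/-- The RKHS inner product `⟨m_α, m_β⟩` of the kernel mean embeddings of `α` and `β`. -/
def kernelInner {d : ℕ} (K : Rd d → Rd d → ℝ) (α β : Measure (Rd d)) : ℝ :=
  ∫ x, ∫ y, K x y ∂β ∂α

lemma mmdSqM_eq_kernelInner {d : ℕ} (K : Rd d → Rd d → ℝ) (α β : Measure (Rd d)) :
    mmdSqM K α β = kernelInner K α α - 2 * kernelInner K α β + kernelInner K β β := rfl

namespace IsKernel

variable {d : ℕ} {K : Rd d → Rd d → ℝ}

lemma exists_abs_le (hK : IsKernel K) : ∃ C, ∀ x y, |K x y| ≤ C := by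
  obtain ⟨C, hC⟩ := hK.bounded
  refine ⟨C, fun x y ↦ abs_le.2 ⟨?_, ?_⟩⟩
  · have h := hK.posdef 2 ![x, y] ![1, 1]
    simp only [Fin.sum_univ_two, Matrix.cons_val_zero, Matrix.cons_val_one, one_mul] at h
    linarith [hC x, hC y, hK.symm x y]
  · have h := hK.posdef 2 ![x, y] ![1, -1]
    simp only [Fin.sum_univ_two, Matrix.cons_val_zero, Matrix.cons_val_one, mul_one, mul_neg,
      neg_mul, one_mul, neg_neg] at h
    linarith [hC x, hC y, hK.symm x y]

lemma measurable_uncurry (hK : IsKernel K) : Measurable (Function.uncurry K) :=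
  (stronglyMeasurable_uncurry_of_continuous_of_stronglyMeasurable
    (fun y ↦ by simpa only [hK.symm _ y] using hK.cont y)
    fun x ↦ (hK.cont x).stronglyMeasurable).measurable

lemma integrable_prod (hK : IsKernel K) (α β : Measure (Rd d)) [IsFiniteMeasure α]
    [IsFiniteMeasure β] : Integrable (Function.uncurry K) (α.prod β) :=
  let ⟨C, hC⟩ := hK.exists_abs_le
  .of_bound hK.measurable_uncurry.aestronglyMeasurable C (ae_of_all _ fun p ↦ hC p.1 p.2)

lemma integrable_integral (hK : IsKernel K) (α β : Measure (Rd d)) [IsFiniteMeasure α]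
    [IsFiniteMeasure β] : Integrable (fun x ↦ ∫ y, K x y ∂β) α :=
  (hK.integrable_prod α β).integral_prod_left

lemma kernelInner_comm (hK : IsKernel K) (α β : Measure (Rd d)) [IsFiniteMeasure α]
    [IsFiniteMeasure β] : kernelInner K α β = kernelInner K β α := by
  rw [kernelInner, integral_integral_swap (hK.integrable_prod α β)]
  simp only [kernelInner, hK.symm]

theorem sum_sum_mul_kernelInner_nonneg (hK : IsKernel K) {ι : Type*} [Fintype ι]
    (α : ι → Measure (Rd d)) (hα : ∀ i, IsFiniteMeasure (α i)) (c : ι → ℝ) :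
    0 ≤ ∑ i, ∑ j, c i * c j * kernelInner K (α i) (α j) := by
  let _ : MeasurableSpace ι := ⊤
  obtain ⟨C, hC⟩ := hK.exists_abs_le
  set τ := ∑ i, (α i).map (·, i)
  set M := ∑ i, |c i|
  have hcM (i : ι) : |c i| ≤ M :=
    Finset.single_le_sum (fun j _ ↦ abs_nonneg (c j)) (Finset.mem_univ i)
  -- `τ` puts a copy of `α i` on the slice `Rd d × {i}`; the weights are folded into `k`.
  set k : Rd d × ι → Rd d × ι → ℝ := fun p q ↦ c p.2 * c q.2 * K p.1 q.1
  have hk (n : ℕ) (x : Fin n → Rd d × ι) : 0 ≤ ∑ i, ∑ j, k (x i) (x j) :=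
    hK.posdef n (fun i ↦ (x i).1) (fun i ↦ c (x i).2)
  have hkm : Measurable (Function.uncurry k) :=
    ((measurable_from_top.comp measurable_fst.snd).mul
      (measurable_from_top.comp measurable_snd.snd)).mul
        (hK.measurable_uncurry.comp (measurable_fst.fst.prodMk measurable_snd.fst))
  have hkC (p q) : |k p q| ≤ M * M * C := by
    simp only [k, abs_mul]
    gcongr <;> first | exact hcM _ | exact hC _ _
  have hkint : Integrable (Function.uncurry k) (τ.prod τ) :=
    .of_bound hkm.aestronglyMeasurable _ (ae_of_all _ fun p ↦ hkC p.1 p.2)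
  have hinner (p : Rd d × ι) : ∫ q, k p q ∂τ = ∑ j, c p.2 * c j * ∫ y, K p.1 y ∂α j := by
    have hkp : Measurable (k p) := hkm.comp measurable_prodMk_left
    rw [integral_sum_map_prodMk α (F := k p)
      (.of_bound hkp.aestronglyMeasurable _ (ae_of_all _ (hkC p)))]
    simp only [k, integral_const_mul]
  have hform : ∫ p, ∫ q, k p q ∂τ ∂τ = ∑ i, ∑ j, c i * c j * kernelInner K (α i) (α j) := by
    rw [integral_sum_map_prodMk α (F := fun p ↦ ∫ q, k p q ∂τ) hkint.integral_prod_left]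
    refine Finset.sum_congr rfl fun i _ ↦ ?_
    simp only [hinner]
    rw [integral_finsetSum _ fun j _ ↦ (hK.integrable_integral _ _).const_mul _]
    simp only [integral_const_mul, kernelInner]
  exact hform ▸ integral_integral_nonneg_of_sum_sum_nonneg hk hkm hkC

lemma mmdSqM_nonneg (hK : IsKernel K) (α β : Measure (Rd d)) [IsFiniteMeasure α]
    [IsFiniteMeasure β] : 0 ≤ mmdSqM K α β := by
  have h := hK.sum_sum_mul_kernelInner_nonneg ![α, β] (Fin.forall_fin_two.2 ⟨‹_›, ‹_›⟩) ![1, -1]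
  simp only [Fin.sum_univ_two, Matrix.cons_val_zero, Matrix.cons_val_one] at h
  rw [mmdSqM_eq_kernelInner, hK.kernelInner_comm β α] at *
  linarith

lemma sq_mmdM (hK : IsKernel K) (α β : Measure (Rd d)) [IsFiniteMeasure α]
    [IsFiniteMeasure β] : mmdM K α β ^ 2 = mmdSqM K α β :=
  Real.sq_sqrt (hK.mmdSqM_nonneg α β)

theorem mmdM_triangle (hK : IsKernel K) (α β γ : Measure (Rd d)) [IsFiniteMeasure α]
    [IsFiniteMeasure β] [IsFiniteMeasure γ] : mmdM K α γ ≤ mmdM K α β + mmdM K β γ := by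
  set B := kernelInner K α β - kernelInner K α γ - kernelInner K β β + kernelInner K β γ
  have hquad (t : ℝ) : 0 ≤ mmdSqM K β γ * (t * t) + 2 * B * t + mmdSqM K α β := by
    have h := hK.sum_sum_mul_kernelInner_nonneg ![α, β, γ]
      (Fin.forall_fin_succ.2 ⟨‹_›, Fin.forall_fin_two.2 ⟨‹_›, ‹_›⟩⟩) ![1, t - 1, -t]
    simp only [Fin.sum_univ_three, Matrix.cons_val_zero, Matrix.cons_val_one, Matrix.cons_val_two,
      Matrix.head_cons, Matrix.tail_cons] at h
    rw [hK.kernelInner_comm β α, hK.kernelInner_comm γ α, hK.kernelInner_comm γ β] at h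
    simp only [mmdSqM_eq_kernelInner, B]
    linarith
  have hB : B ^ 2 ≤ mmdSqM K α β * mmdSqM K β γ := by
    have := discrim_le_zero hquad
    rw [discrim] at this
    nlinarith
  have hαγ : mmdSqM K α γ = mmdSqM K α β + 2 * B + mmdSqM K β γ := by
    simp only [mmdSqM_eq_kernelInner, B]; ring
  have hB' : B ≤ mmdM K α β * mmdM K β γ :=
    (Real.le_sqrt_of_sq_le hB).trans_eq (Real.sqrt_mul (hK.mmdSqM_nonneg α β) _)
  rw [mmdM, Real.sqrt_le_iff]
  refine ⟨add_nonneg (Real.sqrt_nonneg _) (Real.sqrt_nonneg _), ?_⟩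
  rw [add_sq, hK.sq_mmdM, hK.sq_mmdM, hαγ]
  linarith

end IsKernel

section TotalVariation

variable {X : Type*} [MeasurableSpace X]

/-- The total variation `|σ - μ|(X)`, written through the Lebesgue decomposition of `σ`
with respect to `μ`. -/
def tvDist (σ μ : Measure X) : ℝ≥0∞ :=
  ∫⁻ x, ‖(σ.rnDeriv μ x).toReal - 1‖ₑ ∂μ + σ.singularPart μ univ

variable (σ μ : Measure X) [IsFiniteMeasure σ] [IsFiniteMeasure μ]

lemma integrable_toReal_rnDeriv_sub_one :
    Integrable (fun x ↦ (σ.rnDeriv μ x).toReal - 1) μ :=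
  Measure.integrable_toReal_rnDeriv.sub (integrable_const 1)

lemma toReal_tvDist : (tvDist σ μ).toReal
    = ∫ x, ‖(σ.rnDeriv μ x).toReal - 1‖ ∂μ + (σ.singularPart μ).real univ := by
  rw [tvDist, ENNReal.toReal_add (integrable_toReal_rnDeriv_sub_one σ μ).2.ne (measure_ne_top _ _),
    integral_norm_eq_lintegral_enorm (integrable_toReal_rnDeriv_sub_one σ μ).1, measureReal_def]

theorem abs_integral_sub_integral_le_tvDist {g : X → ℝ} (hg : Measurable g) {B : ℝ}
    (hB : ∀ x, |g x| ≤ B) :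
    |∫ x, g x ∂σ - ∫ x, g x ∂μ| ≤ B * (tvDist σ μ).toReal := by
  set ρ := fun x ↦ (σ.rnDeriv μ x).toReal
  have hgσ (ν : Measure X) [IsFiniteMeasure ν] : Integrable g ν :=
    .of_bound hg.aestronglyMeasurable B (ae_of_all _ hB)
  have hdecomp : ∫ x, g x ∂σ = ∫ x, ρ x * g x ∂μ + ∫ x, g x ∂σ.singularPart μ := by
    conv_lhs => rw [← σ.rnDeriv_add_singularPart μ]
    rw [integral_add_measure (hgσ _) (hgσ _),
      integral_withDensity_eq_integral_toReal_smul (σ.measurable_rnDeriv μ) (σ.rnDeriv_lt_top μ)]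
    rfl
  have hac : ∫ x, ρ x * g x ∂μ - ∫ x, g x ∂μ = ∫ x, (ρ x - 1) * g x ∂μ := by
    rw [← integral_sub (Measure.integrable_toReal_rnDeriv.mul_bdd hg.aestronglyMeasurable
      (ae_of_all _ hB)) (hgσ μ)]
    simp only [ρ, sub_mul, one_mul]
  have hacle : |∫ x, (ρ x - 1) * g x ∂μ| ≤ B * ∫ x, ‖ρ x - 1‖ ∂μ := by
    rw [← Real.norm_eq_abs, ← integral_const_mul (μ := μ) B fun x ↦ ‖ρ x - 1‖]
    refine norm_integral_le_of_norm_le ((integrable_toReal_rnDeriv_sub_one σ μ).norm.const_mul B)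
      (ae_of_all _ fun x ↦ ?_)
    rw [norm_mul, mul_comm]
    exact mul_le_mul_of_nonneg_right (hB x) (norm_nonneg _)
  have hsing : |∫ x, g x ∂σ.singularPart μ| ≤ B * (σ.singularPart μ).real univ := by
    rw [← Real.norm_eq_abs]
    exact norm_integral_le_of_norm_le_const (ae_of_all _ hB)
  rw [toReal_tvDist, hdecomp, add_sub_right_comm, hac, mul_add]
  exact (abs_add_le _ _).trans (add_le_add hacle hsing)

end TotalVariation

theorem IsKernel.mmdSqM_le_tvDist {d : ℕ} {K : Rd d → Rd d → ℝ} (hK : IsKernel K) {C : ℝ}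
    (hC : ∀ x y, |K x y| ≤ C) (σ μ : Measure (Rd d)) [IsFiniteMeasure σ] [IsFiniteMeasure μ] :
    mmdSqM K σ μ ≤ C * (tvDist σ μ).toReal ^ 2 := by
  set T := (tvDist σ μ).toReal
  set h := fun x ↦ ∫ y, K x y ∂σ - ∫ y, K x y ∂μ
  have hmeas (ν : Measure (Rd d)) [IsFiniteMeasure ν] : Measurable fun x ↦ ∫ y, K x y ∂ν :=
    (hK.measurable_uncurry.stronglyMeasurable.integral_prod_right' (ν := ν)).measurable
  have hh : |∫ x, h x ∂σ - ∫ x, h x ∂μ| ≤ C * T * T :=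
    abs_integral_sub_integral_le_tvDist σ μ ((hmeas σ).sub (hmeas μ))
      fun x ↦ abs_integral_sub_integral_le_tvDist σ μ (hK.cont x).measurable (hC x)
  have hexp : mmdSqM K σ μ = ∫ x, h x ∂σ - ∫ x, h x ∂μ := by
    rw [integral_sub (hK.integrable_integral σ σ) (hK.integrable_integral σ μ),
      integral_sub (hK.integrable_integral μ σ) (hK.integrable_integral μ μ)]
    have := hK.kernelInner_comm μ σ
    simp only [mmdSqM_eq_kernelInner, kernelInner] at this ⊢
    linarith
  rw [hexp, sq, ← mul_assoc]
  exact (le_abs_self _).trans hh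

namespace IsEntropy

variable {f : ℝ → ℝ≥0∞}

lemma apply_one_add_mul_le (hf : IsEntropy f) {b : ℝ} (hb₀ : 0 ≤ b) (hb₁ : b ≤ 1) (t : ℝ) :
    f (1 + b * (t - 1)) ≤ ENNReal.ofReal b * f t := by
  have h := hf.convex 1 t (1 - b) b (by linarith) hb₀ (by ring)
  rwa [hf.one_eq_zero, mul_zero, zero_add, show (1 - b) * 1 + b * t = 1 + b * (t - 1) by ring] at h

lemma apply_le_of_mem_uIcc (hf : IsEntropy f) {s t : ℝ} (hs : s ∈ uIcc 1 t) : f s ≤ f t := by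
  rcases eq_or_ne t 1 with rfl | ht
  · rw [uIcc_self, mem_singleton_iff] at hs
    rw [hs]
  have ht' : t - 1 ≠ 0 := sub_ne_zero.2 ht
  have hb : 0 ≤ (s - 1) / (t - 1) ∧ (s - 1) / (t - 1) ≤ 1 := by
    rcases mem_uIcc.1 hs with ⟨h₁, h₂⟩ | ⟨h₁, h₂⟩
    · exact ⟨div_nonneg (by linarith) (by linarith), div_le_one_of_le₀ (by linarith) (by linarith)⟩
    · have ht₁ : t < 1 := lt_of_le_of_ne (h₁.trans h₂) ht
      exact ⟨div_nonneg_of_nonpos (by linarith) (by linarith),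
        (div_le_one_of_neg (by linarith)).2 (by linarith)⟩
  calc f s = f (1 + (s - 1) / (t - 1) * (t - 1)) := by rw [div_mul_cancel₀ _ ht', add_sub_cancel]
    _ ≤ ENNReal.ofReal ((s - 1) / (t - 1)) * f t := hf.apply_one_add_mul_le hb.1 hb.2 t
    _ ≤ f t := mul_le_of_le_one_left' (ENNReal.ofReal_le_one.2 hb.2)

lemma ofReal_sub_one_mul_apply_two_le (hf : IsEntropy f) {t : ℝ} (ht : 2 ≤ t) :
    ENNReal.ofReal (t - 1) * f 2 ≤ f t := by
  have ht₁ : 0 < t - 1 := by linarith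
  have h := hf.apply_one_add_mul_le (inv_nonneg.2 ht₁.le) (inv_le_one_of_one_le₀ (by linarith)) t
  rw [inv_mul_cancel₀ ht₁.ne', show (1 : ℝ) + 1 = 2 by norm_num] at h
  calc ENNReal.ofReal (t - 1) * f 2 ≤ ENNReal.ofReal (t - 1) * (ENNReal.ofReal (t - 1)⁻¹ * f t) :=
        by gcongr
    _ = f t := by
        rw [← mul_assoc, ← ENNReal.ofReal_mul ht₁.le, mul_inv_cancel₀ ht₁.ne', ENNReal.ofReal_one,
          one_mul]

lemma recession_pos (hf : IsEntropy f) (hmin : UniqueMinOne f) : 0 < recession f := by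
  have h₂ : 0 < f 2 / 2 := ENNReal.div_pos (hmin 2 (by norm_num)).ne' (by norm_num)
  refine h₂.trans_le (le_limsup_of_frequently_le' (Eventually.frequently ?_))
  filter_upwards [eventually_ge_atTop (2 : ℝ)] with t ht
  rw [ENNReal.le_div_iff_mul_le (Or.inl (ENNReal.ofReal_pos.2 (by linarith)).ne')
    (Or.inl ENNReal.ofReal_ne_top)]
  calc f 2 / 2 * ENNReal.ofReal t = ENNReal.ofReal (t / 2) * f 2 := by
        rw [ENNReal.ofReal_div_of_pos two_pos, ENNReal.ofReal_ofNat, ENNReal.div_eq_inv_mul,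
          ENNReal.div_eq_inv_mul]
        ring
    _ ≤ ENNReal.ofReal (t - 1) * f 2 := by gcongr; linarith
    _ ≤ f t := hf.ofReal_sub_one_mul_apply_two_le ht

lemma ofReal_abs_sub_one_mul_le (hf : IsEntropy f) {ε : ℝ} (hε₀ : 0 ≤ ε) {c : ℝ≥0∞}
    (h₁ : c ≤ f (1 - ε)) (h₂ : c ≤ f (1 + ε)) (h₃ : c ≤ f 2) {t : ℝ} (ht : 0 ≤ t) :
    ENNReal.ofReal |t - 1| * c ≤ ENNReal.ofReal ε * c + f t := by
  rcases lt_or_ge |t - 1| ε with hε | hε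
  · exact le_add_right (by gcongr)
  refine le_add_left ?_
  rcases le_or_gt 2 t with ht₂ | ht₂
  · rw [abs_of_nonneg (by linarith)]
    calc ENNReal.ofReal (t - 1) * c ≤ ENNReal.ofReal (t - 1) * f 2 := by gcongr
      _ ≤ f t := hf.ofReal_sub_one_mul_apply_two_le ht₂
  have hle : c ≤ f t := by
    rcases le_or_gt t 1 with ht₁ | ht₁
    · rw [abs_of_nonpos (by linarith)] at hε
      exact h₁.trans (hf.apply_le_of_mem_uIcc (mem_uIcc.2 (.inr ⟨by linarith, by linarith⟩)))
    · rw [abs_of_pos (by linarith)] at hε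
      exact h₂.trans (hf.apply_le_of_mem_uIcc (mem_uIcc.2 (.inl ⟨by linarith, by linarith⟩)))
  have habs : ENNReal.ofReal |t - 1| ≤ 1 :=
    ENNReal.ofReal_le_one.2 (abs_le.2 ⟨by linarith, by linarith⟩)
  exact (mul_le_of_le_one_left' habs).trans hle

theorem mul_tvDist_le (hf : IsEntropy f) {ε : ℝ} (hε : 0 ≤ ε) {c : ℝ≥0∞} (h₁ : c ≤ f (1 - ε))
    (h₂ : c ≤ f (1 + ε)) (h₃ : c ≤ f 2) (h₄ : c ≤ recession f) {d : ℕ} (σ μ : Measure (Rd d)) :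
    c * tvDist σ μ ≤ c * (ENNReal.ofReal ε * μ univ) + fDiv f σ μ := by
  have hac : c * ∫⁻ x, ‖(σ.rnDeriv μ x).toReal - 1‖ₑ ∂μ
      ≤ c * (ENNReal.ofReal ε * μ univ) + ∫⁻ x, f (σ.rnDeriv μ x).toReal ∂μ :=
    calc c * ∫⁻ x, ‖(σ.rnDeriv μ x).toReal - 1‖ₑ ∂μ
        ≤ ∫⁻ x, c * ‖(σ.rnDeriv μ x).toReal - 1‖ₑ ∂μ := lintegral_const_mul_le _ _
      _ ≤ ∫⁻ x, (c * ENNReal.ofReal ε + f (σ.rnDeriv μ x).toReal) ∂μ := lintegral_mono fun x ↦ by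
          rw [Real.enorm_eq_ofReal_abs, mul_comm, mul_comm c]
          exact hf.ofReal_abs_sub_one_mul_le hε h₁ h₂ h₃ ENNReal.toReal_nonneg
      _ = c * (ENNReal.ofReal ε * μ univ) + ∫⁻ x, f (σ.rnDeriv μ x).toReal ∂μ := by
          rw [lintegral_add_left measurable_const, lintegral_const, mul_assoc]
  calc c * tvDist σ μ
      = c * ∫⁻ x, ‖(σ.rnDeriv μ x).toReal - 1‖ₑ ∂μ + c * σ.singularPart μ univ := mul_add _ _ _
    _ ≤ c * (ENNReal.ofReal ε * μ univ) + ∫⁻ x, f (σ.rnDeriv μ x).toReal ∂μ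
        + recession f * σ.singularPart μ univ := by gcongr
    _ = c * (ENNReal.ofReal ε * μ univ) + fDiv f σ μ := by rw [add_assoc, fDiv]

theorem tendsto_tvDist_of_tendsto_fDiv (hf : IsEntropy f) (hmin : UniqueMinOne f) {ι : Type*}
    {l : Filter ι} {d : ℕ} {σ : ι → Measure (Rd d)} {μ : Measure (Rd d)} [IsFiniteMeasure μ]
    (h : Tendsto (fun i ↦ fDiv f (σ i) μ) l (𝓝 0)) :
    Tendsto (fun i ↦ tvDist (σ i) μ) l (𝓝 0) := by
  refine ENNReal.tendsto_nhds_zero.2 fun η hη ↦ ?_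
  obtain ⟨ε, hε, hεη⟩ := ENNReal.exists_nnreal_pos_mul_lt (measure_ne_top μ univ)
    (ENNReal.half_pos hη.ne').ne'
  set c := min (min (f (1 - ε)) (f (1 + ε))) (min (f 2) (min (recession f) 1))
  have hc₀ : 0 < c := by
    have hε' : (0 : ℝ) < ε := hε
    simp only [c, lt_min_iff]
    exact ⟨⟨hmin _ (by linarith), hmin _ (by linarith)⟩, hmin 2 (by norm_num),
      hf.recession_pos hmin, one_pos⟩
  have hc : c ≠ ⊤ :=
    (((min_le_right _ _).trans ((min_le_right _ _).trans (min_le_right _ _))).trans_lt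
      ENNReal.one_lt_top).ne
  have hcη : 0 < c * (η / 2) := ENNReal.mul_pos hc₀.ne' (ENNReal.half_pos hη.ne').ne'
  filter_upwards [h.eventually (gt_mem_nhds hcη)] with i hi
  rw [← ENNReal.mul_le_mul_iff_right hc₀.ne' hc]
  calc c * tvDist (σ i) μ ≤ c * (ENNReal.ofReal ε * μ univ) + fDiv f (σ i) μ :=
        hf.mul_tvDist_le ε.2 (by simp [c]) (by simp [c]) (by simp [c]) (by simp [c]) (σ i) μ
    _ ≤ c * (η / 2) + c * (η / 2) := by
        gcongr
        simpa using hεη.le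
    _ = c * η := by rw [← mul_add, ENNReal.add_halves]

end IsEntropy

theorem IsKernel.tendsto_mmdM_of_tendsto_tvDist {d : ℕ} {K : Rd d → Rd d → ℝ} (hK : IsKernel K)
    {ι : Type*} {l : Filter ι} {σ : ι → Measure (Rd d)} (hσ : ∀ i, IsFiniteMeasure (σ i))
    {μ : Measure (Rd d)} [IsFiniteMeasure μ] (h : Tendsto (fun i ↦ tvDist (σ i) μ) l (𝓝 0)) :
    Tendsto (fun i ↦ mmdM K (σ i) μ) l (𝓝 0) := by
  obtain ⟨C, hC⟩ := hK.exists_abs_le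
  have hT : Tendsto (fun i ↦ (tvDist (σ i) μ).toReal) l (𝓝 0) :=
    ENNReal.toReal_zero ▸ (ENNReal.tendsto_toReal ENNReal.zero_ne_top).comp h
  have hbound : Tendsto (fun i ↦ √(C * (tvDist (σ i) μ).toReal ^ 2)) l (𝓝 0) := by
    simpa using ((hT.pow 2).const_mul C).sqrt
  refine tendsto_of_tendsto_of_tendsto_of_le_of_le tendsto_const_nhds hbound
    (fun i ↦ Real.sqrt_nonneg _) fun i ↦ ?_
  have := hσ i
  exact Real.sqrt_le_sqrt (hK.mmdSqM_le_tvDist hC (σ i) μ)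

lemma fDiv_self {f : ℝ → ℝ≥0∞} (hf : IsEntropy f) {d : ℕ} (μ : Measure (Rd d)) [SigmaFinite μ] :
    fDiv f μ μ = 0 := by
  have h : ∫⁻ x, f (μ.rnDeriv μ x).toReal ∂μ = 0 := by
    rw [lintegral_congr_ae (g := 0)]
    · simp
    filter_upwards [μ.rnDeriv_self] with x hx
    simp [hx, hf.one_eq_zero]
  simp [fDiv, h, Measure.singularPart_self]

lemma regFDivM_le {d : ℕ} (K : Rd d → Rd d → ℝ) (f : ℝ → ℝ≥0∞) (ν : Measure (Rd d)) (lam : ℝ)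
    (μ σ : Measure (Rd d)) [IsFiniteMeasure σ] :
    regFDivM K f ν lam μ ≤ fDiv f σ ν + ENNReal.ofReal (mmdSqM K μ σ / (2 * lam)) :=
  iInf_le_of_le ⟨σ, ‹_›⟩ le_rfl

lemma regFDivM_le_mmdSqM {d : ℕ} (K : Rd d → Rd d → ℝ) {f : ℝ → ℝ≥0∞} (hf : IsEntropy f)
    (ν : Measure (Rd d)) [IsFiniteMeasure ν] (lam : ℝ) (μ : Measure (Rd d)) :
    regFDivM K f ν lam μ ≤ ENNReal.ofReal (mmdSqM K μ ν / (2 * lam)) := by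
  simpa [fDiv_self hf ν] using regFDivM_le K f ν lam μ ν

theorem tendsto_mmdM_of_tendsto_regFDivM {d : ℕ} {K : Rd d → Rd d → ℝ} (hK : IsKernel K)
    {f : ℝ → ℝ≥0∞} (hf : IsEntropy f) (hmin : UniqueMinOne f) {lam : ℝ} (hlam : 0 < lam)
    {μs : ℕ → Measure (Rd d)} (hfin : ∀ n, IsFiniteMeasure (μs n)) {μ : Measure (Rd d)}
    [IsFiniteMeasure μ] (h : Tendsto (fun n ↦ regFDivM K f μ lam (μs n)) atTop (𝓝 0)) :
    Tendsto (fun n ↦ mmdM K (μs n) μ) atTop (𝓝 0) := by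
  -- `(0 : ℝ≥0∞)⁻¹ = ⊤` still gives a strict inequality, as `regFDivM` is finite.
  have hnear (n : ℕ) : ∃ σ : {σ : Measure (Rd d) // IsFiniteMeasure σ},
      fDiv f σ.1 μ + ENNReal.ofReal (mmdSqM K (μs n) σ.1 / (2 * lam))
        < regFDivM K f μ lam (μs n) + (n : ℝ≥0∞)⁻¹ :=
    iInf_lt_iff.1 <| ENNReal.lt_add_right
      ((regFDivM_le_mmdSqM K hf μ lam _).trans_lt ENNReal.ofReal_lt_top).ne
      (ENNReal.inv_ne_zero.2 (ENNReal.natCast_ne_top n))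
  choose σ hσ using hnear
  have hσfin (n : ℕ) : IsFiniteMeasure (σ n).1 := (σ n).2
  have hsum : Tendsto (fun n ↦ fDiv f (σ n).1 μ
      + ENNReal.ofReal (mmdSqM K (μs n) (σ n).1 / (2 * lam))) atTop (𝓝 0) :=
    tendsto_of_tendsto_of_tendsto_of_le_of_le tendsto_const_nhds
      (add_zero (0 : ℝ≥0∞) ▸ h.add ENNReal.tendsto_inv_nat_nhds_zero) (fun _ ↦ zero_le)
      fun n ↦ (hσ n).le
  have hfDiv : Tendsto (fun n ↦ fDiv f (σ n).1 μ) atTop (𝓝 0) :=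
    tendsto_of_tendsto_of_tendsto_of_le_of_le tendsto_const_nhds hsum (fun _ ↦ zero_le)
      fun _ ↦ le_self_add
  have hpen : Tendsto (fun n ↦ mmdSqM K (μs n) (σ n).1 / (2 * lam)) atTop (𝓝 0) := by
    have := (ENNReal.tendsto_toReal ENNReal.zero_ne_top).comp
      (tendsto_of_tendsto_of_tendsto_of_le_of_le tendsto_const_nhds hsum (fun _ ↦ zero_le)
        fun _ ↦ le_add_self)
    refine (ENNReal.toReal_zero ▸ this).congr fun n ↦ ENNReal.toReal_ofReal ?_
    exact div_nonneg (hK.mmdSqM_nonneg _ _) (by positivity)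
  have h₁ : Tendsto (fun n ↦ mmdM K (μs n) (σ n).1) atTop (𝓝 0) := by
    simpa [mmdM, mul_div_cancel₀ _ (by positivity : 2 * lam ≠ 0)] using
      (hpen.const_mul (2 * lam)).sqrt
  have h₂ : Tendsto (fun n ↦ mmdM K (σ n).1 μ) atTop (𝓝 0) :=
    hK.tendsto_mmdM_of_tendsto_tvDist hσfin (hf.tendsto_tvDist_of_tendsto_fDiv hmin hfDiv)
  exact tendsto_of_tendsto_of_tendsto_of_le_of_le tendsto_const_nhds
    (zero_add (0 : ℝ) ▸ h₁.add h₂) (fun _ ↦ Real.sqrt_nonneg _) fun n ↦ hK.mmdM_triangle _ _ _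

theorem tendsto_regFDivM_of_tendsto_mmdM {d : ℕ} {K : Rd d → Rd d → ℝ} (hK : IsKernel K)
    {f : ℝ → ℝ≥0∞} (hf : IsEntropy f) {lam : ℝ} {μs : ℕ → Measure (Rd d)}
    (hfin : ∀ n, IsFiniteMeasure (μs n)) {μ : Measure (Rd d)} [IsFiniteMeasure μ]
    (h : Tendsto (fun n ↦ mmdM K (μs n) μ) atTop (𝓝 0)) :
    Tendsto (fun n ↦ regFDivM K f μ lam (μs n)) atTop (𝓝 0) := by
  have hbound :
      Tendsto (fun n ↦ ENNReal.ofReal (mmdM K (μs n) μ ^ 2 / (2 * lam))) atTop (𝓝 0) := by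
    simpa using ENNReal.tendsto_ofReal ((h.pow 2).div_const (2 * lam))
  refine tendsto_of_tendsto_of_tendsto_of_le_of_le tendsto_const_nhds hbound (fun _ ↦ zero_le)
    fun n ↦ ?_
  have := hfin n
  rw [hK.sq_mmdM]
  exact regFDivM_le_mmdSqM K hf μ lam (μs n)

theorem regFDiv_metrizes_on_balls_general {d : ℕ} (K : Rd d → Rd d → ℝ)
    (hK : IsKernel K)
    (f : ℝ → ℝ≥0∞) (hf : IsEntropy f) (hmin : UniqueMinOne f)
    (lam : ℝ) (hlam : 0 < lam)
    (μs : ℕ → Measure (Rd d)) (hfin : ∀ n, IsFiniteMeasure (μs n))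
    (μ : Measure (Rd d)) [IsFiniteMeasure μ] :
    Tendsto (fun n => regFDivM K f μ lam (μs n)) atTop (𝓝 0) ↔
      Tendsto (fun n => mmdM K (μs n) μ) atTop (𝓝 0) :=
  ⟨tendsto_mmdM_of_tendsto_regFDivM hK hf hmin hlam hfin,
    tendsto_regFDivM_of_tendsto_mmdM hK hf hfin⟩

/-- On MMD-balls of `M₊(ℝ^d)`, the regularized `f`-divergence metrizes the MMD topology:
for `μ_n, μ ∈ B_r(μ_0)`, `D^λ_f(μ_n|μ) → 0` iff `d_K(μ_n, μ) → 0`. -/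
theorem regFDiv_metrizes_on_balls {d : ℕ} (K : Rd d → Rd d → ℝ)
    (hK : IsKernel K) (hchar : Characteristic K)
    (f : ℝ → ℝ≥0∞) (hf : IsEntropy f) (hmin : UniqueMinOne f)
    (lam : ℝ) (hlam : 0 < lam) (r : ℝ) (hr : 0 < r)
    (μ0 : Measure (Rd d)) [IsFiniteMeasure μ0]
    (μs : ℕ → Measure (Rd d)) (hfin : ∀ n, IsFiniteMeasure (μs n))
    (μ : Measure (Rd d)) [IsFiniteMeasure μ]
    (hball : ∀ n, mmdM K (μs n) μ0 ≤ r) (hμball : mmdM K μ μ0 ≤ r) :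
    Tendsto (fun n => regFDivM K f μ lam (μs n)) atTop (𝓝 0) ↔
      Tendsto (fun n => mmdM K (μs n) μ) atTop (𝓝 0) :=
  regFDiv_metrizes_on_balls_general K hK f hf hmin lam hlam μs hfin μ
end
end

section
/- Let K : ℝ^d×ℝ^d → ℝ be a symmetric positive definite kernel satisfying K(x,x) + K(y,y) − 2K(x,y) ≤ C² ‖x−y‖₂² for all x, y ∈ ℝ^d, for some constant C > 0. Then for all probability measures μ, ν on ℝ^d with finite second moments, d_K(μ,ν) ≤ C · W_2(μ,ν). Moreover, if K(x,y) = φ(‖x−y‖₂²) for a completely monotone φ ∈ C¹([0,∞)) (so that K is positive definite), this hypothesis holds with C = √(−2φ'(0)). -/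
open MeasureTheory ENNReal Filter Topology Set
open scoped ZeroAtInfty RealInnerProductSpace BoundedContinuousFunction

noncomputable section

/-- `φ` is completely monotone on `[0,∞)`:
`φ ∈ C^∞((0,∞)) ∩ C([0,∞))` and `(−1)^k φ^(k)(r) ≥ 0` for all `k` and `r > 0`. -/
def CompletelyMonotone (φ : ℝ → ℝ) : Prop :=
  ContinuousOn φ (Set.Ici 0) ∧ ContDiffOn ℝ (⊤ : ℕ∞) φ (Set.Ioi 0) ∧
    ∀ (k : ℕ), ∀ r > (0 : ℝ), 0 ≤ (-1 : ℝ) ^ k * iteratedDeriv k φ r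

/-- A symmetric positive definite (bounded) kernel. -/
structure IsPDKernel {d : ℕ} (K : Rd d → Rd d → ℝ) : Prop where
  symm : ∀ x y, K x y = K y x
  posdef : ∀ (n : ℕ) (x : Fin n → Rd d) (a : Fin n → ℝ),
    0 ≤ ∑ i, ∑ j, a i * a j * K (x i) (x j)
  bounded : ∃ C : ℝ, ∀ x, K x x ≤ C

/-- The squared Wasserstein-2 distance of two measures on `ℝ^d`. -/
noncomputable def W2sq {d : ℕ} (μ ν : Measure (Rd d)) : ℝ≥0∞ :=
  ⨅ (π : Measure (Rd d × Rd d)) (_ : π.map Prod.fst = μ ∧ π.map Prod.snd = ν),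
    ∫⁻ p, ENNReal.ofReal (‖p.1 - p.2‖ ^ 2) ∂π

namespace MMDProofAux

lemma cs_of_quad {A B C2 : ℝ} (h : ∀ t : ℝ, 0 ≤ A * t^2 + 2*B*t + C2) : B^2 ≤ A * C2 := by
  have hd := discrim_le_zero (a := A) (b := 2*B) (c := C2) (fun t => by nlinarith [h t])
  unfold discrim at hd; nlinarith

variable {d : ℕ} {K : Rd d → Rd d → ℝ}

lemma Kxx_nonneg (hK : IsPDKernel K) (x : Rd d) : 0 ≤ K x x := by
  have := hK.posdef 1 ![x] ![1]
  simpa using this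

lemma K_cs (hK : IsPDKernel K) (x y : Rd d) : (K x y)^2 ≤ K x x * K y y := by
  apply cs_of_quad; intro t
  have := hK.posdef 2 ![x, y] ![t, 1]
  simp [Fin.sum_univ_two] at this
  rw [hK.symm y x] at this
  nlinarith [this]

lemma K_diff_sq (hK : IsPDKernel K) (x y y' : Rd d) :
    (K x y - K x y')^2 ≤ K x x * (K y y + K y' y' - 2 * K y y') := by
  apply cs_of_quad; intro t
  have := hK.posdef 3 ![x, y, y'] ![t, 1, -1]
  simp [Fin.sum_univ_three] at this
  rw [hK.symm y x, hK.symm y' x, hK.symm y' y] at this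
  nlinarith [this]

lemma F_cs (hK : IsPDKernel K) (p q : Rd d × Rd d) :
    (K p.1 q.1 + K p.2 q.2 - K p.1 q.2 - K p.2 q.1)^2 ≤
      (K p.1 p.1 + K p.2 p.2 - K p.1 p.2 - K p.2 p.1) *
      (K q.1 q.1 + K q.2 q.2 - K q.1 q.2 - K q.2 q.1) := by
  apply cs_of_quad; intro t
  have := hK.posdef 4 ![p.1, p.2, q.1, q.2] ![t, -t, 1, -1]
  simp [Fin.sum_univ_four] at this
  rw [hK.symm q.1 p.1, hK.symm q.1 p.2, hK.symm q.2 p.1, hK.symm q.2 p.2,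
    hK.symm p.2 p.1] at this
  nlinarith [this, hK.symm p.2 p.1, hK.symm q.2 q.1]

lemma Fpp_nonneg (hK : IsPDKernel K) (p : Rd d × Rd d) :
    0 ≤ K p.1 p.1 + K p.2 p.2 - K p.1 p.2 - K p.2 p.1 := by
  have := hK.posdef 2 ![p.1, p.2] ![1, -1]
  simp [Fin.sum_univ_two] at this
  nlinarith

lemma K_bdd (hK : IsPDKernel K) : ∃ B : ℝ, 0 ≤ B ∧ (∀ x, K x x ≤ B) ∧ ∀ x y, |K x y| ≤ B := by
  obtain ⟨B, hB⟩ := hK.bounded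
  have hB0 : 0 ≤ B := le_trans (Kxx_nonneg hK (0 : Rd d)) (hB 0)
  refine ⟨B, hB0, hB, fun x y => ?_⟩
  have h1 := K_cs hK x y
  have h2 := hB x; have h3 := hB y
  have h4 := Kxx_nonneg hK x; have h5 := Kxx_nonneg hK y
  rw [abs_le]; constructor <;> nlinarith

lemma K_lip (hK : IsPDKernel K) {B C : ℝ} (hB0 : 0 ≤ B) (hB : ∀ x, K x x ≤ B) (hC : 0 ≤ C)
    (hL : ∀ x y : Rd d, K x x + K y y - 2 * K x y ≤ C ^ 2 * ‖x - y‖ ^ 2)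
    (x y y' : Rd d) : |K x y - K x y'| ≤ Real.sqrt B * C * ‖y - y'‖ := by
  have h1 := K_diff_sq hK x y y'
  have h2 : 0 ≤ K y y + K y' y' - 2 * K y y' := by
    have := Fpp_nonneg hK (y, y'); have := hK.symm y y'; simp at *; nlinarith
  have h3 := hL y y'
  have h4 := Kxx_nonneg hK x
  have h5 := hB x
  have hs : Real.sqrt B ^ 2 = B := Real.sq_sqrt hB0
  have hsn : 0 ≤ Real.sqrt B := Real.sqrt_nonneg B
  have hn : (0:ℝ) ≤ ‖y - y'‖ := norm_nonneg _
  rw [abs_le]; constructor <;> nlinarith [sq_nonneg (‖y - y'‖), mul_nonneg (mul_nonneg hsn hC) hn]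

lemma K_cont (hK : IsPDKernel K) {B C : ℝ} (hB0 : 0 ≤ B) (hB : ∀ x, K x x ≤ B) (hC : 0 ≤ C)
    (hL : ∀ x y : Rd d, K x x + K y y - 2 * K x y ≤ C ^ 2 * ‖x - y‖ ^ 2) :
    Continuous (fun p : Rd d × Rd d => K p.1 p.2) := by
  set L : ℝ := Real.sqrt B * C with hLdef
  have hL0 : 0 ≤ L := mul_nonneg (Real.sqrt_nonneg _) hC
  refine LipschitzWith.continuous (K := (2*L).toNNReal) (LipschitzWith.of_dist_le_mul ?_)
  intro p q
  have e1 : |K p.1 p.2 - K p.1 q.2| ≤ L * ‖p.2 - q.2‖ := K_lip hK hB0 hB hC hL _ _ _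
  have e2 : |K p.1 q.2 - K q.1 q.2| ≤ L * ‖p.1 - q.1‖ := by
    rw [hK.symm p.1 q.2, hK.symm q.1 q.2]; exact K_lip hK hB0 hB hC hL _ _ _
  have d1 : dist p.1 q.1 ≤ dist p q := le_max_left _ _
  have d2 : dist p.2 q.2 ≤ dist p q := le_max_right _ _
  have hd : (0:ℝ) ≤ dist p q := dist_nonneg
  rw [Real.dist_eq, Real.coe_toNNReal _ (by positivity)]
  rw [dist_eq_norm] at d1 d2
  calc |K p.1 p.2 - K q.1 q.2| ≤ |K p.1 p.2 - K p.1 q.2| + |K p.1 q.2 - K q.1 q.2| := by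
        have := abs_sub_abs_le_abs_sub (K p.1 p.2) (K q.1 q.2); exact abs_sub_le _ _ _
    _ ≤ L * ‖p.2 - q.2‖ + L * ‖p.1 - q.1‖ := add_le_add e1 e2
    _ ≤ L * dist p q + L * dist p q := add_le_add (by nlinarith) (by nlinarith)
    _ = 2 * L * dist p q := by ring

lemma intg_of_bdd {X : Type*} [MeasurableSpace X] {ξ : Measure X} [IsFiniteMeasure ξ]
    {g : X → ℝ} {B : ℝ}
    (hm : AEStronglyMeasurable g ξ) (hb : ∀ x, |g x| ≤ B) : Integrable g ξ :=
  (integrable_const B).mono' hm (Filter.Eventually.of_forall (fun x => by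
    simpa [Real.norm_eq_abs] using hb x))

lemma jordan_add (μ ν : Measure (Rd d)) [IsFiniteMeasure μ] [IsFiniteMeasure ν] :
    (μ.toSignedMeasure - ν.toSignedMeasure).toJordanDecomposition.posPart + ν =
    (μ.toSignedMeasure - ν.toSignedMeasure).toJordanDecomposition.negPart + μ := by
  set s := μ.toSignedMeasure - ν.toSignedMeasure with hs
  have h := s.toSignedMeasure_toJordanDecomposition
  ext A hA
  have h2 := congrArg (fun m => m A) h
  simp only [JordanDecomposition.toSignedMeasure] at h2
  rw [VectorMeasure.sub_apply, Measure.toSignedMeasure_apply_measurable hA,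
    Measure.toSignedMeasure_apply_measurable hA, hs, VectorMeasure.sub_apply,
    Measure.toSignedMeasure_apply_measurable hA,
    Measure.toSignedMeasure_apply_measurable hA] at h2
  rw [Measure.add_apply, Measure.add_apply]
  have hfin : ∀ (ξ : Measure (Rd d)) [IsFiniteMeasure ξ], ξ A ≠ ⊤ :=
    fun ξ _ => measure_ne_top ξ A
  rw [← ENNReal.toReal_eq_toReal_iff' (by finiteness) (by finiteness)]
  rw [ENNReal.toReal_add (by finiteness) (by finiteness),
    ENNReal.toReal_add (by finiteness) (by finiteness)]
  simp only [measureReal_def] at h2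
  linarith

lemma sIntegral_eq (μ ν : Measure (Rd d)) [IsFiniteMeasure μ] [IsFiniteMeasure ν]
    {g : Rd d → ℝ} {B : ℝ} (hm : Measurable g) (hb : ∀ x, |g x| ≤ B) :
    sIntegral (μ.toSignedMeasure - ν.toSignedMeasure) g = ∫ x, g x ∂μ - ∫ x, g x ∂ν := by
  set P := (μ.toSignedMeasure - ν.toSignedMeasure).toJordanDecomposition.posPart with hP
  set N := (μ.toSignedMeasure - ν.toSignedMeasure).toJordanDecomposition.negPart with hN
  have key : ∫ x, g x ∂(P + ν) = ∫ x, g x ∂(N + μ) := by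
    rw [jordan_add μ ν]
  rw [integral_add_measure (intg_of_bdd hm.aestronglyMeasurable hb)
      (intg_of_bdd hm.aestronglyMeasurable hb),
    integral_add_measure (intg_of_bdd hm.aestronglyMeasurable hb)
      (intg_of_bdd hm.aestronglyMeasurable hb)] at key
  simp only [sIntegral, ← hP, ← hN]
  linarith

lemma integral_marg {μ : Measure (Rd d)} {π : Measure (Rd d × Rd d)}
    {f : Rd d × Rd d → Rd d} (hf : Measurable f) (h : π.map f = μ)
    {g : Rd d → ℝ} (hm : Measurable g) : ∫ x, g x ∂μ = ∫ p, g (f p) ∂π := by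
  rw [← h, integral_map hf.aemeasurable hm.aestronglyMeasurable]

lemma key_bound (hK : IsPDKernel K) {C : ℝ} (hC : 0 < C)
    (hL : ∀ x y : Rd d, K x x + K y y - 2 * K x y ≤ C ^ 2 * ‖x - y‖ ^ 2)
    (μ ν : Measure (Rd d)) [IsProbabilityMeasure μ] [IsProbabilityMeasure ν]
    (π : Measure (Rd d × Rd d)) [IsProbabilityMeasure π]
    (hfst : π.map Prod.fst = μ) (hsnd : π.map Prod.snd = ν)
    (hT : Integrable (fun p : Rd d × Rd d => ‖p.1 - p.2‖ ^ 2) π) :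
    mmdSq K μ.toSignedMeasure ν.toSignedMeasure ≤
      C ^ 2 * ∫ p : Rd d × Rd d, ‖p.1 - p.2‖ ^ 2 ∂π := by
  obtain ⟨B, hB0, hBxx, hBb⟩ := K_bdd hK
  have hKc : Continuous (fun p : Rd d × Rd d => K p.1 p.2) := K_cont hK hB0 hBxx hC.le hL
  have hKm : ∀ x : Rd d, Measurable (K x) := fun x =>
    (hKc.comp (continuous_const.prodMk continuous_id)).measurable
  have hKm2 : ∀ x : Rd d, Measurable (fun y => K y x) := fun x =>
    (hKc.comp (continuous_id.prodMk continuous_const)).measurable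
  set F : Rd d × Rd d → Rd d × Rd d → ℝ :=
    fun p q => K p.1 q.1 + K p.2 q.2 - K p.1 q.2 - K p.2 q.1 with hF
  have hFc : Continuous (fun r : (Rd d × Rd d) × (Rd d × Rd d) => F r.1 r.2) := by
    apply Continuous.sub; apply Continuous.sub; apply Continuous.add
    · exact hKc.comp ((continuous_fst.fst).prodMk (continuous_snd.fst))
    · exact hKc.comp ((continuous_fst.snd).prodMk (continuous_snd.snd))
    · exact hKc.comp ((continuous_fst.fst).prodMk (continuous_snd.snd))
    · exact hKc.comp ((continuous_fst.snd).prodMk (continuous_snd.fst))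
  have hFb : ∀ p q, |F p q| ≤ 4 * B := by
    intro p q
    have h1 := hBb p.1 q.1; have h2 := hBb p.2 q.2
    have h3 := hBb p.1 q.2; have h4 := hBb p.2 q.1
    rw [abs_le] at *
    constructor <;> [skip; skip] <;> simp only [hF] <;>
      obtain ⟨a1,b1⟩ := h1 <;> obtain ⟨a2,b2⟩ := h2 <;>
      obtain ⟨a3,b3⟩ := h3 <;> obtain ⟨a4,b4⟩ := h4 <;> linarith
  have hFcs : ∀ p q, F p q ≤ Real.sqrt (F p p) * Real.sqrt (F q q) := by
    intro p q
    have h1 := F_cs hK p q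
    have h2 := Fpp_nonneg hK p
    calc F p q ≤ |F p q| := le_abs_self _
      _ = Real.sqrt ((F p q)^2) := (Real.sqrt_sq_eq_abs _).symm
      _ ≤ Real.sqrt (F p p * F q q) := Real.sqrt_le_sqrt h1
      _ = Real.sqrt (F p p) * Real.sqrt (F q q) := Real.sqrt_mul h2 _
  set g : Rd d × Rd d → ℝ := fun p => Real.sqrt (F p p) with hg
  have hgc : Continuous g := Real.continuous_sqrt.comp
    (hFc.comp (continuous_id.prodMk continuous_id))
  have hgb : ∀ p, |g p| ≤ Real.sqrt (4*B) := by
    intro p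
    rw [abs_of_nonneg (Real.sqrt_nonneg _)]
    exact Real.sqrt_le_sqrt ((le_abs_self _).trans (hFb p p))
  set hfun : Rd d → ℝ :=
    fun x => sIntegral (μ.toSignedMeasure - ν.toSignedMeasure) (fun y => K x y) with hhf
  have int1 : ∀ x : Rd d, Integrable (fun q : Rd d × Rd d => K x q.1) π := fun x =>
    intg_of_bdd (((hKm x).comp measurable_fst).aestronglyMeasurable) (fun q => hBb x q.1)
  have int2 : ∀ x : Rd d, Integrable (fun q : Rd d × Rd d => K x q.2) π := fun x =>
    intg_of_bdd (((hKm x).comp measurable_snd).aestronglyMeasurable) (fun q => hBb x q.2)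
  have repr : ∀ x, hfun x = ∫ q : Rd d × Rd d, (K x q.1 - K x q.2) ∂π := by
    intro x
    rw [hhf]
    simp only
    rw [sIntegral_eq μ ν (hKm x) (fun y => hBb x y),
      integral_marg measurable_fst hfst (hKm x),
      integral_marg measurable_snd hsnd (hKm x),
      ← integral_sub (int1 x) (int2 x)]
  have int3 : ∀ x : Rd d, Integrable (fun q : Rd d × Rd d => K x q.1 - K x q.2) π :=
    fun x => (int1 x).sub (int2 x)
  have hdiff : ∀ x x' : Rd d, hfun x - hfun x' = ∫ q, F (x, x') q ∂π := by
    intro x x'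
    rw [repr x, repr x', ← integral_sub (int3 x) (int3 x')]
    congr 1; funext q; simp only [hF]; ring
  have hfb : ∀ x, |hfun x| ≤ 2 * B := by
    intro x
    rw [repr x]
    have hb : ∀ᵐ q ∂π, ‖K x q.1 - K x q.2‖ ≤ 2 * B := by
      refine Filter.Eventually.of_forall (fun q => ?_)
      have h1 := abs_le.mp (hBb x q.1); have h2 := abs_le.mp (hBb x q.2)
      rw [Real.norm_eq_abs, abs_le]
      constructor <;> linarith [h1.1, h1.2, h2.1, h2.2]
    have := norm_integral_le_of_norm_le_const hb
    simpa [Real.norm_eq_abs, measure_univ] using this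
  have hfLip : ∀ x x' : Rd d, |hfun x - hfun x'| ≤ 2 * (Real.sqrt B * C) * ‖x - x'‖ := by
    intro x x'
    rw [hdiff x x']
    have hb : ∀ᵐ q ∂π, ‖F (x, x') q‖ ≤ 2 * (Real.sqrt B * C) * ‖x - x'‖ := by
      refine Filter.Eventually.of_forall (fun q => ?_)
      have e1 : |K x q.1 - K x' q.1| ≤ Real.sqrt B * C * ‖x - x'‖ := by
        rw [hK.symm x q.1, hK.symm x' q.1]; exact K_lip hK hB0 hBxx hC.le hL q.1 x x'
      have e2 : |K x q.2 - K x' q.2| ≤ Real.sqrt B * C * ‖x - x'‖ := by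
        rw [hK.symm x q.2, hK.symm x' q.2]; exact K_lip hK hB0 hBxx hC.le hL q.2 x x'
      have h1 := abs_le.mp e1; have h2 := abs_le.mp e2
      rw [Real.norm_eq_abs, abs_le]
      simp only [hF]
      constructor <;> nlinarith [h1.1, h1.2, h2.1, h2.2]
    have := norm_integral_le_of_norm_le_const hb
    simpa [Real.norm_eq_abs, measure_univ] using this
  have hfc : Continuous hfun := by
    have hL0 : (0:ℝ) ≤ 2 * (Real.sqrt B * C) := by positivity
    refine LipschitzWith.continuous (K := (2 * (Real.sqrt B * C)).toNNReal)
      (LipschitzWith.of_dist_le_mul ?_)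
    intro x x'
    rw [Real.dist_eq, Real.coe_toNNReal _ hL0, dist_eq_norm]
    exact hfLip x x'
  have hfm : Measurable hfun := hfc.measurable
  have intf1 : Integrable (fun p : Rd d × Rd d => hfun p.1) π :=
    intg_of_bdd ((hfm.comp measurable_fst).aestronglyMeasurable) (fun p => hfb p.1)
  have intf2 : Integrable (fun p : Rd d × Rd d => hfun p.2) π :=
    intg_of_bdd ((hfm.comp measurable_snd).aestronglyMeasurable) (fun p => hfb p.2)
  have mm : mmdSq K μ.toSignedMeasure ν.toSignedMeasure
      = ∫ p : Rd d × Rd d, (hfun p.1 - hfun p.2) ∂π := by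
    have mm0 : mmdSq K μ.toSignedMeasure ν.toSignedMeasure
        = sIntegral (μ.toSignedMeasure - ν.toSignedMeasure) hfun := rfl
    rw [mm0, sIntegral_eq μ ν hfm hfb,
      integral_marg measurable_fst hfst hfm,
      integral_marg measurable_snd hsnd hfm,
      ← integral_sub intf1 intf2]
  have intF : ∀ p, Integrable (fun q => F p q) π := fun p =>
    intg_of_bdd ((hFc.comp (continuous_const.prodMk continuous_id)).measurable.aestronglyMeasurable)
      (fun q => hFb p q)
  have intg' : Integrable g π :=
    intg_of_bdd hgc.measurable.aestronglyMeasurable hgb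
  set I : ℝ := ∫ q, g q ∂π with hI
  have hI0 : 0 ≤ I := integral_nonneg (fun q => by simp [hg, Real.sqrt_nonneg])
  have inner : ∀ p, (∫ q, F p q ∂π) ≤ g p * I := by
    intro p
    calc ∫ q, F p q ∂π ≤ ∫ q, g p * g q ∂π :=
          integral_mono (intF p) (intg'.const_mul _) (fun q => by
            simpa [hg] using hFcs p q)
      _ = g p * I := by rw [integral_const_mul]
  have intOuter : Integrable (fun p : Rd d × Rd d => ∫ q, F p q ∂π) π := by
    have he : (fun p : Rd d × Rd d => ∫ q, F p q ∂π) = fun p => hfun p.1 - hfun p.2 := by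
      funext p
      show (∫ q, F p q ∂π) = hfun p.1 - hfun p.2
      rw [hdiff p.1 p.2]
    rw [he]
    exact intf1.sub intf2
  have mm2 : ∫ p : Rd d × Rd d, (hfun p.1 - hfun p.2) ∂π
      = ∫ p : Rd d × Rd d, (∫ q, F p q ∂π) ∂π := by
    refine integral_congr_ae (Filter.Eventually.of_forall (fun p => ?_))
    show hfun p.1 - hfun p.2 = (∫ q, F p q ∂π)
    rw [hdiff p.1 p.2]
  have step2 : ∫ p : Rd d × Rd d, (∫ q, F p q ∂π) ∂π ≤ ∫ p, g p * I ∂π :=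
    integral_mono intOuter (intg'.mul_const I) inner
  have step3 : ∫ p, g p * I ∂π = I * I := by rw [integral_mul_const]
  have hmem : MemLp g 2 π :=
    MemLp.of_bound hgc.measurable.aestronglyMeasurable (Real.sqrt (4*B))
      (Filter.Eventually.of_forall (fun p => by rw [Real.norm_eq_abs]; exact hgb p))
  have hvar := ProbabilityTheory.variance_nonneg g π
  rw [ProbabilityTheory.variance_eq_sub hmem] at hvar
  simp only [Pi.pow_apply] at hvar
  have step4 : I * I ≤ ∫ p, (g p)^2 ∂π := by
    have : (∫ p, g p ∂π) = I := rfl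
    nlinarith [hvar]
  have step5 : ∫ p, (g p)^2 ∂π = ∫ p, F p p ∂π := by
    refine integral_congr_ae (Filter.Eventually.of_forall (fun p => ?_))
    simp only [hg]
    exact Real.sq_sqrt (Fpp_nonneg hK p)
  have intFpp : Integrable (fun p : Rd d × Rd d => F p p) π :=
    intg_of_bdd ((hFc.comp (continuous_id.prodMk continuous_id)).measurable.aestronglyMeasurable)
      (fun p => hFb p p)
  have step6 : ∫ p : Rd d × Rd d, F p p ∂π ≤ ∫ p : Rd d × Rd d, C^2 * ‖p.1 - p.2‖^2 ∂π := by
    refine integral_mono intFpp (hT.const_mul _) (fun p => ?_)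
    have h1 := hL p.1 p.2
    have h2 := hK.symm p.1 p.2
    simp only [hF]
    linarith
  have step7 : ∫ p : Rd d × Rd d, C^2 * ‖p.1 - p.2‖^2 ∂π
      = C^2 * ∫ p : Rd d × Rd d, ‖p.1 - p.2‖^2 ∂π := by rw [integral_const_mul]
  linarith [mm, mm2, step2, step3, step4, step5, step6, step7]

lemma part2 (φ : ℝ → ℝ) (hcm : CompletelyMonotone φ) (hc1 : ContDiffOn ℝ 1 φ (Set.Ici 0)) :
    ∀ r : ℝ, 0 ≤ r →
      2 * φ 0 - 2 * φ r ≤ Real.sqrt (-2 * derivWithin φ (Set.Ici 0) 0) ^ 2 * r := by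
  obtain ⟨hcont, hsm, hsign⟩ := hcm
  set a := derivWithin φ (Set.Ici 0) 0 with ha
  set g := derivWithin φ (Set.Ici 0) with hgdef
  have hgc : ContinuousOn g (Set.Ici 0) :=
    hc1.continuousOn_derivWithin (uniqueDiffOn_Ici 0) le_rfl
  have hder : ∀ t ∈ Set.Ioi (0:ℝ), HasDerivAt φ (deriv φ t) t := by
    intro t ht
    exact ((hsm.contDiffAt ((isOpen_Ioi).mem_nhds ht)).differentiableAt (by simp)).hasDerivAt
  have hg_eq : ∀ t ∈ Set.Ioi (0:ℝ), g t = deriv φ t := by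
    intro t ht
    exact derivWithin_of_mem_nhds (mem_of_superset ((isOpen_Ioi).mem_nhds ht) Ioi_subset_Ici_self)
  have hd1 : ∀ t ∈ Set.Ioi (0:ℝ), deriv φ t ≤ 0 := by
    intro t ht
    have := hsign 1 t ht
    rw [iteratedDeriv_one] at this
    nlinarith
  have hit2 : iteratedDeriv 2 φ = deriv (deriv φ) := by
    rw [iteratedDeriv_succ, iteratedDeriv_one]
  have hDD : ContDiffOn ℝ (⊤ : ℕ∞) (deriv φ) (Set.Ioi 0) := by
    have := hsm.deriv_of_isOpen (isOpen_Ioi) (m := (⊤ : ℕ∞)) (by simp)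
    exact this
  have hmono : MonotoneOn (deriv φ) (Set.Ioi 0) := by
    apply monotoneOn_of_deriv_nonneg (convex_Ioi 0) hDD.continuousOn
    · rw [interior_Ioi]
      exact hDD.differentiableOn (by simp)
    · rw [interior_Ioi]
      intro t ht
      have := hsign 2 t ht
      rw [hit2] at this
      nlinarith
  have hgt : Tendsto g (𝓝[>] (0:ℝ)) (𝓝 a) := by
    have h1 : Tendsto g (𝓝[Set.Ici 0] (0:ℝ)) (𝓝 (g 0)) := hgc 0 Set.self_mem_Ici
    exact h1.mono_left (nhdsWithin_mono _ Ioi_subset_Ici_self)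
  have ha_le : ∀ c ∈ Set.Ioi (0:ℝ), a ≤ deriv φ c := by
    intro c hc
    refine le_of_tendsto hgt ?_
    filter_upwards [Ioo_mem_nhdsGT_of_mem (⟨le_rfl, hc⟩ : (0:ℝ) ∈ Set.Ico 0 c)] with t ht
    rw [hg_eq t ht.1]
    exact hmono ht.1 hc ht.2.le
  have ha0 : a ≤ 0 := (ha_le 1 (by norm_num)).trans (hd1 1 (by norm_num))
  have key : ∀ r : ℝ, 0 ≤ r → φ 0 - φ r ≤ -a * r := by
    intro r hr
    rcases eq_or_lt_of_le hr with h | h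
    · simp [← h]
    · obtain ⟨c, hc, hslope⟩ := exists_hasDerivAt_eq_slope φ (deriv φ) h
        (hcont.mono (fun t ht => ht.1)) (fun t ht => hder t ht.1)
      rw [sub_zero] at hslope
      have h2 : a ≤ (φ r - φ 0) / r := hslope ▸ ha_le c hc.1
      rw [le_div_iff₀ h] at h2
      linarith
  intro r hr
  have hs : Real.sqrt (-2 * a) ^ 2 = -2 * a := Real.sq_sqrt (by linarith)
  rw [hs]
  have := key r hr
  nlinarith

lemma sq_rpow_half (x : ℝ≥0∞) : (x ^ (2:ℕ)) ^ ((1:ℝ)/2) = x := by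
  rw [← ENNReal.rpow_natCast x 2, ← ENNReal.rpow_mul]
  norm_num

lemma part1 {d : ℕ} (K : Rd d → Rd d → ℝ) (hK : IsPDKernel K)
    (C : ℝ) (hC : 0 < C) (hL : ∀ x y : Rd d, K x x + K y y - 2 * K x y ≤ C ^ 2 * ‖x - y‖ ^ 2)
    (μ ν : Measure (Rd d)) [IsProbabilityMeasure μ] [IsProbabilityMeasure ν] :
    ENNReal.ofReal (mmd K μ.toSignedMeasure ν.toSignedMeasure) ≤
      ENNReal.ofReal C * W2sq μ ν ^ ((1:ℝ)/2) := by
  set m := mmd K μ.toSignedMeasure ν.toSignedMeasure with hm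
  have hm0 : 0 ≤ m := Real.sqrt_nonneg _
  have key2 : ∀ π : Measure (Rd d × Rd d), (π.map Prod.fst = μ ∧ π.map Prod.snd = ν) →
      ENNReal.ofReal (m^2) ≤
        ENNReal.ofReal (C^2) * ∫⁻ p, ENNReal.ofReal (‖p.1 - p.2‖^2) ∂π := by
    rintro π ⟨hfst, hsnd⟩
    haveI : IsProbabilityMeasure π := by
      constructor
      rw [← Set.preimage_univ (f := @Prod.fst (Rd d) (Rd d)),
        ← Measure.map_apply measurable_fst MeasurableSet.univ, hfst]
      exact measure_univ
    have hC2 : ENNReal.ofReal (C^2) ≠ 0 := by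
      simp only [ne_eq, ENNReal.ofReal_eq_zero, not_le]
      positivity
    by_cases hfin : (∫⁻ p, ENNReal.ofReal (‖p.1 - p.2‖^2) ∂π) = ⊤
    · rw [hfin, ENNReal.mul_top hC2]
      exact le_top
    · have hnn : 0 ≤ᵐ[π] fun p : Rd d × Rd d => ‖p.1 - p.2‖^2 :=
        Filter.Eventually.of_forall fun p => by positivity
      have hmeas : Measurable fun p : Rd d × Rd d => ‖p.1 - p.2‖^2 :=
        ((continuous_fst.sub continuous_snd).norm.pow 2).measurable
      have hint : Integrable (fun p : Rd d × Rd d => ‖p.1 - p.2‖^2) π := by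
        refine ⟨hmeas.aestronglyMeasurable, ?_⟩
        rw [hasFiniteIntegral_iff_ofReal hnn]
        exact lt_top_iff_ne_top.mpr hfin
      have hkey := key_bound hK hC hL μ ν π hfst hsnd hint
      have hT0 : 0 ≤ ∫ p : Rd d × Rd d, ‖p.1-p.2‖^2 ∂π := integral_nonneg fun p => by positivity
      have hlift : ENNReal.ofReal (∫ p : Rd d × Rd d, ‖p.1-p.2‖^2 ∂π)
          = ∫⁻ p, ENNReal.ofReal (‖p.1 - p.2‖^2) ∂π :=
        ofReal_integral_eq_lintegral_ofReal hint hnn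
      have hm2 : m^2 ≤ C^2 * ∫ p : Rd d × Rd d, ‖p.1-p.2‖^2 ∂π := by
        by_cases hpos : 0 ≤ mmdSq K μ.toSignedMeasure ν.toSignedMeasure
        · have he : m^2 = mmdSq K μ.toSignedMeasure ν.toSignedMeasure := Real.sq_sqrt hpos
          rw [he]; exact hkey
        · have he : m = 0 := Real.sqrt_eq_zero_of_nonpos (le_of_not_ge hpos)
          rw [he]
          simpa using mul_nonneg (sq_nonneg C) hT0
      calc ENNReal.ofReal (m^2) ≤ ENNReal.ofReal (C^2 * ∫ p : Rd d × Rd d, ‖p.1-p.2‖^2 ∂π) :=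
            ENNReal.ofReal_le_ofReal hm2
        _ = ENNReal.ofReal (C^2) * ENNReal.ofReal (∫ p : Rd d × Rd d, ‖p.1-p.2‖^2 ∂π) :=
            ENNReal.ofReal_mul (by positivity)
        _ = _ := by rw [hlift]
  have hW : ENNReal.ofReal (m^2) ≤ ENNReal.ofReal (C^2) * W2sq μ ν := by
    rw [W2sq, ENNReal.mul_iInf_of_ne (by simp only [ne_eq, ENNReal.ofReal_eq_zero, not_le]; positivity) ENNReal.ofReal_ne_top]
    refine le_iInf fun π => ?_
    rw [ENNReal.mul_iInf_of_ne (by simp only [ne_eq, ENNReal.ofReal_eq_zero, not_le]; positivity) ENNReal.ofReal_ne_top]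
    exact le_iInf fun hπ => key2 π hπ
  have e1 : ENNReal.ofReal (m^2) = (ENNReal.ofReal m)^(2:ℕ) := ENNReal.ofReal_pow hm0 2
  have e2 : ENNReal.ofReal (C^2) = (ENNReal.ofReal C)^(2:ℕ) := ENNReal.ofReal_pow hC.le 2
  have h3 := ENNReal.rpow_le_rpow hW (by norm_num : (0:ℝ) ≤ 1/2)
  rw [e1, sq_rpow_half, e2, ENNReal.mul_rpow_of_nonneg _ _ (by norm_num : (0:ℝ) ≤ 1/2),
    sq_rpow_half] at h3
  exact h3


end MMDProofAux

/-- If `K(x,x) + K(y,y) − 2K(x,y) ≤ C²‖x−y‖²`, then `d_K(μ,ν) ≤ C · W₂(μ,ν)` for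
probability measures with finite second moments; moreover for radial kernels
`K(x,y) = φ(‖x−y‖²)` with `φ` completely monotone and `C¹([0,∞))`, the hypothesis holds
with `C = √(−2φ'(0))`. -/
theorem mmd_le_wasserstein {d : ℕ} :
    (∀ K : Rd d → Rd d → ℝ, IsPDKernel K →
      ∀ C : ℝ, 0 < C → (∀ x y : Rd d, K x x + K y y - 2 * K x y ≤ C ^ 2 * ‖x - y‖ ^ 2) →
      ∀ (μ ν : Measure (Rd d)) [IsProbabilityMeasure μ] [IsProbabilityMeasure ν],
        (∫⁻ x, ENNReal.ofReal (‖x‖ ^ 2) ∂μ) < ⊤ →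
        (∫⁻ x, ENNReal.ofReal (‖x‖ ^ 2) ∂ν) < ⊤ →
        ENNReal.ofReal (mmd K μ.toSignedMeasure ν.toSignedMeasure) ≤
          ENNReal.ofReal C * W2sq μ ν ^ (1 / 2 : ℝ)) ∧
    (∀ φ : ℝ → ℝ, CompletelyMonotone φ → ContDiffOn ℝ 1 φ (Set.Ici 0) →
      ∀ x y : Rd d,
        φ (‖x - x‖ ^ 2) + φ (‖y - y‖ ^ 2) - 2 * φ (‖x - y‖ ^ 2) ≤
          Real.sqrt (-2 * derivWithin φ (Set.Ici 0) 0) ^ 2 * ‖x - y‖ ^ 2) := by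
  constructor
  · intro K hK C hC hL μ ν _ _ _ _
    exact MMDProofAux.part1 K hK C hC hL μ ν
  · intro φ hcm hc1 x y
    have h := MMDProofAux.part2 φ hcm hc1 (‖x - y‖ ^ 2) (by positivity)
    rw [sub_self, norm_zero, sub_self, norm_zero,
      show ((0:ℝ) ^ 2) = 0 by norm_num]
    linarith
end
end
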